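/- arXiv:2501.07027 — 4 statements merged into one kernel-verified Lean document; each statement's English description precedes it below -/
import Mathlib

section
/- For a nonempty set A ⊆ L^n (L = {0,...,l-1}) and positions p₁ ≤ p₂ in [n] and symbols b₁, b₂ ∈ L, the single-deletion intersection |Δ⁻_{p₁,b₁}(A) ∩ Δ⁻_{p₂,b₂}(A)| equals the single-insertion intersection |Δ⁺_{p₁,b₁}(A) ∩ Δ⁺_{p₂+1,b₂}(A)|, where Δ⁻_{p,b}(A) is the set of strings obtained from strings in A by deleting position p when that position equals b, and Δ⁺_{p,b}(A) is the set of strings obtained by inserting b at position p. -/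
/-- Single-deletion set: strings obtained from strings in `A` by deleting
position `p` when that position equals `b`. -/
def delMinus {l n : ℕ} (p : Fin (n + 1)) (b : Fin l)
    (A : Set (Fin (n + 1) → Fin l)) : Set (Fin n → Fin l) :=
  {x | p.insertNth b x ∈ A}

/-- Single-insertion set: strings obtained by inserting `b` at position `p`
into strings of `A`. -/
def delPlus {l n : ℕ} (p : Fin (n + 1)) (b : Fin l)
    (A : Set (Fin n → Fin l)) : Set (Fin (n + 1) → Fin l) :=
  (fun a => p.insertNth b a) '' A

/-!
Reinserting `b₂` at `p₂` and then `b₁` at `p₁` is injective, and for `p₁ ≤ p₂` it equals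
inserting `b₁` at `p₁` and then `b₂` at `p₂ + 1`. Hence it maps `Δ⁻_{p₁,b₁}(A) ∩ Δ⁻_{p₂,b₂}(A)`
into `Δ⁺_{p₁,b₁}(A) ∩ Δ⁺_{p₂+1,b₂}(A)`; conversely a string in both insertion sets carries `b₁`
at `p₁` and `b₂` at `p₂ + 1`, so it is such a reinsertion.
-/

namespace Fin

variable {n : ℕ} {p₁ p₂ : Fin (n + 1)}

lemma castSucc_succAbove_succAbove (h : p₁ ≤ p₂) (m : Fin n) :
    p₁.castSucc.succAbove (p₂.succAbove m) = p₂.succ.succAbove (p₁.succAbove m) := by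
  have := succAbove_succAbove_succAbove_predAbove p₁.castSucc p₂ m
  rwa [succAbove_castSucc_of_le _ _ h, predAbove_castSucc_of_le _ _ h, eq_comm] at this

lemma insertNth_castSucc_insertNth {α : Type*} (h : p₁ ≤ p₂) (b₁ b₂ : α) (x : Fin n → α) :
    (insertNth p₁.castSucc b₁ (insertNth p₂ b₂ x : Fin (n + 1) → α) : Fin (n + 2) → α)
      = insertNth p₂.succ b₂ (insertNth p₁ b₁ x : Fin (n + 1) → α) := by
  refine insertNth_eq_iff.mpr ⟨?_, (eq_insertNth_iff.mpr ⟨?_, ?_⟩).symm⟩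
  · rw [← succAbove_succ_of_le _ _ h, insertNth_apply_succAbove, insertNth_apply_same]
  · rw [removeNth_apply, succAbove_castSucc_of_le _ _ h, insertNth_apply_same]
  · ext m
    rw [removeNth_apply, removeNth_apply, castSucc_succAbove_succAbove h,
      insertNth_apply_succAbove, insertNth_apply_succAbove]

end Fin

section DeletionInsertion

variable {l n : ℕ} {p₁ p₂ : Fin (n + 1)} (b₁ b₂ : Fin l)

def reinsertTwo (p₁ p₂ : Fin (n + 1)) (x : Fin n → Fin l) : Fin (n + 2) → Fin l :=
  p₁.castSucc.insertNth b₁ (p₂.insertNth b₂ x)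

lemma reinsertTwo_injective (p₁ p₂ : Fin (n + 1)) :
    Function.Injective (reinsertTwo b₁ b₂ p₁ p₂) := fun x y hxy => by
  simpa only [reinsertTwo, Fin.removeNth_insertNth] using
    congrArg (fun z => p₂.removeNth (p₁.castSucc.removeNth z)) hxy

lemma image_reinsertTwo_delMinus_inter (hle : p₁ ≤ p₂) (A : Set (Fin (n + 1) → Fin l)) :
    reinsertTwo b₁ b₂ p₁ p₂ '' (delMinus p₁ b₁ A ∩ delMinus p₂ b₂ A)
      = delPlus p₁.castSucc b₁ A ∩ delPlus p₂.succ b₂ A := by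
  ext y
  constructor
  · rintro ⟨x, ⟨h₁, h₂⟩, rfl⟩
    exact ⟨⟨_, h₂, rfl⟩, ⟨_, h₁, (Fin.insertNth_castSucc_insertNth hle b₁ b₂ x).symm⟩⟩
  · rintro ⟨⟨a, ha, rfl⟩, ⟨a', ha', heq⟩⟩
    dsimp only at heq ⊢
    have ha_p₂ : a p₂ = b₂ := by
      have := congrFun heq p₂.succ
      rwa [Fin.insertNth_apply_same, ← Fin.succAbove_castSucc_of_le _ _ hle,
        Fin.insertNth_apply_succAbove, eq_comm] at this
    obtain ⟨x, rfl⟩ : ∃ x, a = p₂.insertNth b₂ x :=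
      ⟨p₂.removeNth a, Fin.eq_insertNth_iff.mpr ⟨ha_p₂, rfl⟩⟩
    rw [Fin.insertNth_castSucc_insertNth hle] at heq
    obtain rfl : a' = p₁.insertNth b₁ x := by
      simpa using congrArg p₂.succ.removeNth heq
    exact ⟨x, ⟨ha', ha⟩, rfl⟩

end DeletionInsertion

theorem stmt0_general (l n : ℕ) (A : Set (Fin (n + 1) → Fin l))
    (p₁ p₂ : Fin (n + 1)) (hle : p₁ ≤ p₂) (b₁ b₂ : Fin l) :
    (delMinus p₁ b₁ A ∩ delMinus p₂ b₂ A).ncard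
      = (delPlus p₁.castSucc b₁ A ∩ delPlus p₂.succ b₂ A).ncard := by
  rw [← image_reinsertTwo_delMinus_inter b₁ b₂ hle,
    Set.ncard_image_of_injective _ (reinsertTwo_injective b₁ b₂ p₁ p₂)]

theorem stmt0 (l n : ℕ) (A : Set (Fin (n + 1) → Fin l)) (hA : A.Nonempty)
    (p₁ p₂ : Fin (n + 1)) (hle : p₁ ≤ p₂) (b₁ b₂ : Fin l) :
    (delMinus p₁ b₁ A ∩ delMinus p₂ b₂ A).ncard
      = (delPlus p₁.castSucc b₁ A ∩ delPlus p₂.succ b₂ A).ncard :=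
  stmt0_general l n A p₁ p₂ hle b₁ b₂
end

section
/- Conditions (C1^del) and (C1^ins) are equivalent: for a family of nonempty sets A_i ⊆ L^n (i ∈ L), the quantity |Δ⁻_{p₁,b₁}(A_i) ∩ Δ⁻_{p₂,b₂}(A_i)| / |A_i| is independent of i for all p₁,p₂ ∈ [n] and b₁,b₂ ∈ L, if and only if |Δ⁺_{p₁,b₁}(A_i) ∩ Δ⁺_{p₂,b₂}(A_i)| / |A_i| is independent of i for all p₁,p₂ ∈ [n+1] and b₁,b₂ ∈ L. -/
lemma mem_delPlus {l n : ℕ} {p : Fin (n + 1)} {b : Fin l} {A : Set (Fin n → Fin l)}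
    {y : Fin (n + 1) → Fin l} :
    y ∈ delPlus p b A ↔ ∃ a ∈ A, p.insertNth b a = y := Iff.rfl

lemma val_succAbove' {n : ℕ} (i : Fin (n + 1)) (j : Fin n) :
    ((i.succAbove j : Fin (n + 1)) : ℕ) = if (j : ℕ) < (i : ℕ) then (j : ℕ) else (j : ℕ) + 1 := by
  rcases Fin.lt_or_le (Fin.castSucc j) i with h | h
  · rw [Fin.succAbove_of_castSucc_lt _ _ h]
    have : (j : ℕ) < (i : ℕ) := h
    simp [this]
  · rw [Fin.succAbove_of_le_castSucc _ _ h]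
    have : (i : ℕ) ≤ (j : ℕ) := h
    simp [Nat.not_lt.mpr this]

lemma succAbove_succAbove_comm {n : ℕ} (p q : Fin (n + 1)) (h : p ≤ q) (j : Fin n) :
    (Fin.castSucc p).succAbove (q.succAbove j) = (Fin.succ q).succAbove (p.succAbove j) := by
  have h' : (p : ℕ) ≤ (q : ℕ) := h
  apply Fin.ext
  simp only [val_succAbove', Fin.coe_castSucc, Fin.val_succ]
  split_ifs <;> omega

/-- Composite double-insertion map. -/
def ins2 {l n : ℕ} (p q : Fin (n + 1)) (b₁ b₂ : Fin l) (x : Fin n → Fin l) :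
    Fin (n + 2) → Fin l :=
  (Fin.succ q).insertNth (α := fun _ => Fin l) b₂ (p.insertNth b₁ x)

lemma ins2_eq_left {l n : ℕ} (p q : Fin (n + 1)) (h : p ≤ q) (b₁ b₂ : Fin l)
    (x : Fin n → Fin l) :
    (Fin.castSucc p).insertNth (α := fun _ => Fin l) b₁ (q.insertNth b₂ x)
      = ins2 p q b₁ b₂ x := by
  have hlt : Fin.castSucc p < Fin.succ q := by
    rw [Fin.lt_def]; simpa using Nat.lt_succ_of_le h
  rw [Fin.insertNth_eq_iff]
  constructor
  · have h1 : (Fin.succ q).succAbove p = Fin.castSucc p :=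
      Fin.succAbove_of_castSucc_lt _ _ hlt
    have h2 := Fin.insertNth_apply_succAbove (α := fun _ => Fin l) (Fin.succ q) b₂
      (p.insertNth b₁ x) p
    rw [h1] at h2
    exact (h2.trans (Fin.insertNth_apply_same (α := fun _ => Fin l) p b₁ x)).symm
  · rw [Fin.insertNth_eq_iff]
    constructor
    · have h1 : (Fin.castSucc p).succAbove q = Fin.succ q := by
        apply Fin.succAbove_of_le_castSucc
        rw [Fin.le_def]; simpa using h
      have h2 : Fin.removeNth (Fin.castSucc p) (ins2 p q b₁ b₂ x) q
          = ins2 p q b₁ b₂ x ((Fin.castSucc p).succAbove q) := rfl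
      rw [h2, h1]
      exact (Fin.insertNth_apply_same (α := fun _ => Fin l) (Fin.succ q) b₂ _).symm
    · funext j
      have h2 : Fin.removeNth q (Fin.removeNth (Fin.castSucc p) (ins2 p q b₁ b₂ x)) j
          = ins2 p q b₁ b₂ x ((Fin.castSucc p).succAbove (q.succAbove j)) := rfl
      rw [h2, succAbove_succAbove_comm p q h j]
      have h3 := Fin.insertNth_apply_succAbove (α := fun _ => Fin l) (Fin.succ q) b₂
        (p.insertNth b₁ x) (p.succAbove j)
      have h4 := Fin.insertNth_apply_succAbove (α := fun _ => Fin l) p b₁ x j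
      exact (h3.trans h4).symm

lemma insertNth_injective {l n : ℕ} (p : Fin (n + 1)) (b : Fin l) :
    Function.Injective (fun x : Fin n → Fin l =>
      p.insertNth (α := fun _ => Fin l) b x) := by
  intro x y hxy
  have := congrArg (Fin.removeNth p) hxy
  simpa using this

/-- The key bijection lemma. -/
lemma delPlus_inter_eq {l n : ℕ} (p q : Fin (n + 1)) (h : p ≤ q) (b₁ b₂ : Fin l)
    (A : Set (Fin (n + 1) → Fin l)) :
    delPlus (Fin.castSucc p) b₁ A ∩ delPlus (Fin.succ q) b₂ A
      = ins2 p q b₁ b₂ '' (delMinus q b₂ A ∩ delMinus p b₁ A) := by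
  have hlt : Fin.castSucc p < Fin.succ q := by
    rw [Fin.lt_def]; simpa using Nat.lt_succ_of_le h
  ext y
  constructor
  · rintro ⟨hy₁, hy₂⟩
    obtain ⟨a₁, ha₁, hy₁⟩ := mem_delPlus.mp hy₁
    obtain ⟨a₂, ha₂, hy₂⟩ := mem_delPlus.mp hy₂
    set x := Fin.removeNth p a₂ with hxdef
    have ha₂p : a₂ p = b₁ := by
      have h1 : (Fin.succ q).succAbove p = Fin.castSucc p :=
        Fin.succAbove_of_castSucc_lt _ _ hlt
      have h2 := Fin.insertNth_apply_succAbove (α := fun _ => Fin l) (Fin.succ q) b₂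
        a₂ p
      rw [h1, hy₂, ← hy₁] at h2
      rw [← h2]
      exact Fin.insertNth_apply_same (α := fun _ => Fin l) (Fin.castSucc p) b₁ a₁
    have ha₂eq : a₂ = p.insertNth b₁ x := by
      rw [hxdef, ← ha₂p, Fin.insertNth_self_removeNth]
    have hyeq : y = ins2 p q b₁ b₂ x := by
      rw [← hy₂, ha₂eq]; rfl
    have ha₁eq : a₁ = q.insertNth b₂ x := by
      apply insertNth_injective (Fin.castSucc p) b₁
      have hgoal : Fin.insertNth (α := fun _ => Fin l) (Fin.castSucc p) b₁ a₁
          = Fin.insertNth (α := fun _ => Fin l) (Fin.castSucc p) b₁ (q.insertNth b₂ x) := by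
        rw [hy₁, hyeq, ins2_eq_left p q h b₁ b₂ x]
      exact hgoal
    refine ⟨x, ⟨?_, ?_⟩, hyeq.symm⟩
    · show q.insertNth b₂ x ∈ A
      rw [← ha₁eq]; exact ha₁
    · show p.insertNth b₁ x ∈ A
      rw [← ha₂eq]; exact ha₂
  · rintro ⟨x, ⟨hx₂, hx₁⟩, rfl⟩
    constructor
    · exact mem_delPlus.mpr ⟨q.insertNth b₂ x, hx₂, ins2_eq_left p q h b₁ b₂ x⟩
    · exact mem_delPlus.mpr ⟨p.insertNth b₁ x, hx₁, rfl⟩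

lemma ins2_injective {l n : ℕ} (p q : Fin (n + 1)) (b₁ b₂ : Fin l) :
    Function.Injective (ins2 p q b₁ b₂) := fun x y hxy =>
  insertNth_injective p b₁ (insertNth_injective (Fin.succ q) b₂ hxy)

lemma delPlus_inter_ncard {l n : ℕ} (p q : Fin (n + 1)) (h : p ≤ q) (b₁ b₂ : Fin l)
    (A : Set (Fin (n + 1) → Fin l)) :
    (delPlus (Fin.castSucc p) b₁ A ∩ delPlus (Fin.succ q) b₂ A).ncard
      = (delMinus q b₂ A ∩ delMinus p b₁ A).ncard := by
  rw [delPlus_inter_eq p q h b₁ b₂ A]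
  exact Set.ncard_image_of_injective _ (ins2_injective p q b₁ b₂)

lemma key2 {l n : ℕ} (p₁ p₂ : Fin (n + 2)) (b₁ b₂ : Fin l) (h : p₁ < p₂) :
    ∃ q₁ q₂ : Fin (n + 1), ∃ c₁ c₂ : Fin l, ∀ B : Set (Fin (n + 1) → Fin l),
      (delPlus p₁ b₁ B ∩ delPlus p₂ b₂ B).ncard
        = (delMinus q₁ c₁ B ∩ delMinus q₂ c₂ B).ncard := by
  have hne : p₁ ≠ Fin.last (n + 1) := by
    intro he; rw [he] at h; exact absurd h (Fin.not_lt.mpr (Fin.le_last _))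
  have hne0 : p₂ ≠ 0 := by
    intro he; rw [he] at h; exact absurd h (Fin.not_lt.mpr (Fin.zero_le _))
  set p := p₁.castPred hne with hp
  set q := p₂.pred hne0 with hq
  have hpq : p ≤ q := by
    rw [Fin.le_def]
    have h1 : (p : ℕ) = (p₁ : ℕ) := rfl
    have h2 : (q : ℕ) = (p₂ : ℕ) - 1 := rfl
    have h3 : (p₁ : ℕ) < (p₂ : ℕ) := h
    have h4 : (p₂ : ℕ) ≠ 0 := fun h0 => hne0 (Fin.ext h0)
    omega
  refine ⟨q, p, b₂, b₁, fun B => ?_⟩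
  have e1 : p₁ = Fin.castSucc p := (Fin.castSucc_castPred p₁ hne).symm
  have e2 : p₂ = Fin.succ q := (Fin.succ_pred p₂ hne0).symm
  rw [e1, e2, delPlus_inter_ncard p q hpq b₁ b₂ B]

lemma delPlus_ncard {l n : ℕ} (p : Fin (n + 1)) (b : Fin l) (B : Set (Fin n → Fin l)) :
    (delPlus p b B).ncard = B.ncard :=
  Set.ncard_image_of_injective B (insertNth_injective p b)

lemma delPlus_inter_same {l n : ℕ} (p : Fin (n + 1)) (b₁ b₂ : Fin l) (hb : b₁ ≠ b₂)
    (B : Set (Fin n → Fin l)) : delPlus p b₁ B ∩ delPlus p b₂ B = ∅ := by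
  rw [Set.eq_empty_iff_forall_notMem]
  rintro y ⟨hy₁, hy₂⟩
  obtain ⟨a₁, _, hy₁⟩ := mem_delPlus.mp hy₁
  obtain ⟨a₂, _, hy₂⟩ := mem_delPlus.mp hy₂
  apply hb
  have h1 : (p.insertNth b₁ a₁ : Fin (n + 1) → Fin l) p = b₁ := Fin.insertNth_apply_same (α := fun _ => Fin l) p b₁ a₁
  have h2 : (p.insertNth b₂ a₂ : Fin (n + 1) → Fin l) p = b₂ := Fin.insertNth_apply_same (α := fun _ => Fin l) p b₂ a₂
  rw [← h1, hy₁, ← hy₂, h2]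

theorem stmt3 (l n : ℕ) (A : Fin l → Set (Fin (n + 1) → Fin l))
    (hA : ∀ i, (A i).Nonempty) :
    (∀ (p₁ p₂ : Fin (n + 1)) (b₁ b₂ : Fin l) (i j : Fin l),
        ((delMinus p₁ b₁ (A i) ∩ delMinus p₂ b₂ (A i)).ncard : ℝ) / (A i).ncard
          = ((delMinus p₁ b₁ (A j) ∩ delMinus p₂ b₂ (A j)).ncard : ℝ) / (A j).ncard)
      ↔
    (∀ (p₁ p₂ : Fin (n + 2)) (b₁ b₂ : Fin l) (i j : Fin l),
        ((delPlus p₁ b₁ (A i) ∩ delPlus p₂ b₂ (A i)).ncard : ℝ) / (A i).ncard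
          = ((delPlus p₁ b₁ (A j) ∩ delPlus p₂ b₂ (A j)).ncard : ℝ) / (A j).ncard) := by
  have hAcard : ∀ i, ((A i).ncard : ℝ) ≠ 0 := by
    intro i
    have h0 : 0 < (A i).ncard := (Set.ncard_pos (Set.toFinite _)).mpr (hA i)
    exact_mod_cast h0.ne'
  constructor
  · intro H p₁ p₂ b₁ b₂ i j
    rcases lt_trichotomy p₁ p₂ with h | h | h
    · obtain ⟨q₁, q₂, c₁, c₂, hk⟩ := key2 p₁ p₂ b₁ b₂ h
      rw [hk (A i), hk (A j)]
      exact H q₁ q₂ c₁ c₂ i j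
    · subst h
      by_cases hb : b₁ = b₂
      · subst hb
        rw [Set.inter_self, Set.inter_self, delPlus_ncard, delPlus_ncard,
          div_self (hAcard i), div_self (hAcard j)]
      · rw [delPlus_inter_same p₁ b₁ b₂ hb, delPlus_inter_same p₁ b₁ b₂ hb]
        simp
    · obtain ⟨q₁, q₂, c₁, c₂, hk⟩ := key2 p₂ p₁ b₂ b₁ h
      rw [Set.inter_comm (delPlus p₁ b₁ (A i)), Set.inter_comm (delPlus p₁ b₁ (A j)),
        hk (A i), hk (A j)]
      exact H q₁ q₂ c₁ c₂ i j
  · intro H p₁ p₂ b₁ b₂ i j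
    rcases le_total p₁ p₂ with h | h
    · rw [Set.inter_comm (delMinus p₁ b₁ (A i)), Set.inter_comm (delMinus p₁ b₁ (A j)),
        ← delPlus_inter_ncard p₁ p₂ h b₁ b₂ (A i), ← delPlus_inter_ncard p₁ p₂ h b₁ b₂ (A j)]
      exact H _ _ b₁ b₂ i j
    · rw [← delPlus_inter_ncard p₂ p₁ h b₂ b₁ (A i), ← delPlus_inter_ncard p₂ p₁ h b₂ b₁ (A j)]
      exact H _ _ b₂ b₁ i j
end

section
/- Conditions (C2^del) and (C2^ins) are equivalent: for a family of nonempty sets A_i ⊆ L^n (i ∈ L), one has Δ⁻_{p₁,b₁}(A_i) ∩ Δ⁻_{p₂,b₂}(A_j) = ∅ for all p₁,p₂ ∈ [n], b₁,b₂ ∈ L and all i ≠ j, if and only if Δ⁺_{p₁,b₁}(A_i) ∩ Δ⁺_{p₂,b₂}(A_j) = ∅ for all p₁,p₂ ∈ [n+1], b₁,b₂ ∈ L and i ≠ j. -/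
lemma succAbove_val' {n : ℕ} (p : Fin (n+1)) (i : Fin n) :
    (p.succAbove i : ℕ) = if (i : ℕ) < (p : ℕ) then (i : ℕ) else (i : ℕ) + 1 := by
  rw [Fin.succAbove]
  split_ifs with h1 h2 h2 <;>
    simp_all [Fin.lt_def, Fin.castSucc, Fin.castAdd, Fin.castLE]

lemma sa_comm {n : ℕ} (t s : Fin (n+1)) (h : t ≤ s) (m : Fin n) :
    t.castSucc.succAbove (s.succAbove m) = s.succ.succAbove (t.succAbove m) := by
  have h' : (t : ℕ) ≤ (s : ℕ) := h
  ext
  simp only [succAbove_val', Fin.coe_castSucc, Fin.val_succ]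
  split_ifs <;> omega

lemma insert_comm' {l n : ℕ} (t s : Fin (n+1)) (h : t ≤ s) (b c : Fin l)
    (x : Fin n → Fin l) :
    Fin.insertNth (α := fun _ => Fin l) s.succ c (Fin.insertNth (α := fun _ => Fin l) t b x) =
      Fin.insertNth (α := fun _ => Fin l) t.castSucc b (Fin.insertNth (α := fun _ => Fin l) s c x) := by
  funext j
  rcases eq_or_ne j t.castSucc with rfl | hj
  · have ht : Fin.succAbove s.succ t = t.castSucc := by
      rw [Fin.succAbove_of_castSucc_lt]
      exact Fin.castSucc_lt_succ_iff.mpr h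
    rw [Fin.insertNth_apply_same, ← ht, Fin.insertNth_apply_succAbove,
      Fin.insertNth_apply_same]
  · obtain ⟨k, rfl⟩ := Fin.exists_succAbove_eq hj
    rcases eq_or_ne s k with rfl | hk
    · have hs : t.castSucc.succAbove s = s.succ := Fin.succAbove_castSucc_of_le t s h
      rw [hs, Fin.insertNth_apply_same, ← hs, Fin.insertNth_apply_succAbove,
        Fin.insertNth_apply_same]
    · obtain ⟨m, rfl⟩ := Fin.exists_succAbove_eq hk.symm
      rw [Fin.insertNth_apply_succAbove, sa_comm t s h m,
        Fin.insertNth_apply_succAbove, Fin.insertNth_apply_succAbove,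
        Fin.insertNth_apply_succAbove]

lemma back_lt {l n : ℕ} {a a' : Fin (n+1) → Fin l} {q₁ q₂ : Fin (n+2)} {c₁ c₂ : Fin l}
    (hlt : q₁ < q₂)
    (hy : Fin.insertNth (α := fun _ => Fin l) q₁ c₁ a = Fin.insertNth (α := fun _ => Fin l) q₂ c₂ a') :
    ∃ (p₁ p₂ : Fin (n+1)) (b₁ b₂ : Fin l) (x : Fin n → Fin l),
      Fin.insertNth p₁ b₁ x = a ∧ Fin.insertNth p₂ b₂ x = a' := by
  have hq2 : q₂ ≠ 0 := Fin.pos_iff_ne_zero.mp (lt_of_le_of_lt (Fin.zero_le q₁) hlt)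
  have hq1 : q₁ ≠ Fin.last (n+1) := Fin.ne_last_of_lt hlt
  obtain ⟨s, rfl⟩ : ∃ s, q₂ = s.succ := ⟨q₂.pred hq2, (Fin.succ_pred _ _).symm⟩
  obtain ⟨t, rfl⟩ : ∃ t, q₁ = t.castSucc := ⟨q₁.castPred hq1, (Fin.castSucc_castPred _ _).symm⟩
  have h : t ≤ s := Fin.castSucc_lt_succ_iff.mp hlt
  have has : a s = c₂ := by
    have h1 := congrFun hy (t.castSucc.succAbove s)
    rw [Fin.insertNth_apply_succAbove, Fin.succAbove_castSucc_of_le t s h,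
      Fin.insertNth_apply_same] at h1
    exact h1
  have hax : Fin.insertNth s c₂ (Fin.removeNth s a) = a := by
    rw [← has]; exact Fin.insertNth_self_removeNth s a
  have ha' : Fin.insertNth t c₁ (Fin.removeNth s a) = a' := by
    have hc := insert_comm' t s h c₁ c₂ (Fin.removeNth s a)
    rw [hax, hy] at hc
    have := congrArg (Fin.removeNth s.succ) hc
    simpa [Fin.removeNth_insertNth] using this
  exact ⟨s, t, c₂, c₁, Fin.removeNth s a, hax, ha'⟩

lemma key {l n : ℕ} (a a' : Fin (n+1) → Fin l) :
    (∃ (p₁ p₂ : Fin (n+1)) (b₁ b₂ : Fin l) (x : Fin n → Fin l),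
        Fin.insertNth p₁ b₁ x = a ∧ Fin.insertNth p₂ b₂ x = a') ↔
    (∃ (q₁ q₂ : Fin (n+2)) (c₁ c₂ : Fin l),
        Fin.insertNth (α := fun _ => Fin l) q₁ c₁ a = Fin.insertNth (α := fun _ => Fin l) q₂ c₂ a') := by
  constructor
  · rintro ⟨p₁, p₂, b₁, b₂, x, rfl, rfl⟩
    rcases le_total p₁ p₂ with h | h
    · exact ⟨p₂.succ, p₁.castSucc, b₂, b₁, insert_comm' p₁ p₂ h b₁ b₂ x⟩
    · exact ⟨p₂.castSucc, p₁.succ, b₂, b₁, (insert_comm' p₂ p₁ h b₂ b₁ x).symm⟩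
  · rintro ⟨q₁, q₂, c₁, c₂, hy⟩
    rcases lt_trichotomy q₁ q₂ with hlt | heq | hgt
    · exact back_lt hlt hy
    · subst heq
      have haa' : a = a' := by
        have := congrArg (Fin.removeNth q₁) hy
        simpa [Fin.removeNth_insertNth] using this
      subst haa'
      exact ⟨0, 0, a 0, a 0, Fin.removeNth 0 a, Fin.insertNth_self_removeNth 0 a,
        Fin.insertNth_self_removeNth 0 a⟩
    · obtain ⟨p₁, p₂, b₁, b₂, x, h1, h2⟩ := back_lt hgt hy.symm
      exact ⟨p₂, p₁, b₂, b₁, x, h2, h1⟩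

theorem stmt4 (l n : ℕ) (A : Fin l → Set (Fin (n + 1) → Fin l))
    (hA : ∀ i, (A i).Nonempty) :
    (∀ (p₁ p₂ : Fin (n + 1)) (b₁ b₂ : Fin l) (i j : Fin l), i ≠ j →
        delMinus p₁ b₁ (A i) ∩ delMinus p₂ b₂ (A j) = ∅)
      ↔
    (∀ (p₁ p₂ : Fin (n + 2)) (b₁ b₂ : Fin l) (i j : Fin l), i ≠ j →
        delPlus p₁ b₁ (A i) ∩ delPlus p₂ b₂ (A j) = ∅) := by
  constructor
  · intro H p₁ p₂ b₁ b₂ i j hij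
    rw [Set.eq_empty_iff_forall_notMem]
    rintro y ⟨⟨u, hu, rfl⟩, ⟨v, hv, hyv⟩⟩
    obtain ⟨r₁, r₂, d₁, d₂, x, hx1, hx2⟩ := (key u v).mpr ⟨p₁, p₂, b₁, b₂, hyv.symm⟩
    have h := H r₁ r₂ d₁ d₂ i j hij
    rw [Set.eq_empty_iff_forall_notMem] at h
    refine h x ⟨?_, ?_⟩
    · show Fin.insertNth r₁ d₁ x ∈ A i
      rw [hx1]; exact hu
    · show Fin.insertNth r₂ d₂ x ∈ A j
      rw [hx2]; exact hv
  · intro H p₁ p₂ b₁ b₂ i j hij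
    rw [Set.eq_empty_iff_forall_notMem]
    rintro x ⟨hx1, hx2⟩
    obtain ⟨q₁, q₂, c₁, c₂, hq⟩ :=
      (key (Fin.insertNth p₁ b₁ x) (Fin.insertNth p₂ b₂ x)).mp
        ⟨p₁, p₂, b₁, b₂, x, rfl, rfl⟩
    have h := H q₁ q₂ c₁ c₂ i j hij
    rw [Set.eq_empty_iff_forall_notMem] at h
    exact h _ ⟨⟨_, hx1, rfl⟩, ⟨_, hx2, hq.symm⟩⟩
end

section
/- Suppose a quantum code with orthonormal logical codewords |0_L⟩,…,|(l-1)_L⟩ ∈ ℂ^{l^n} admits a recovery superoperator for a Kraus set A = {A_a} of l^{n'} × l^n matrices, i.e., a family {R_r} of l^{n'} × l^{n'} matrices with Σ_r R_r† R_r = I and R_r A_a |i_L⟩ = λ_{r,a} |0…0 i⟩ for scalars λ_{r,a} independent of i. Then the Knill–Laflamme condition holds: for all a, b and all i, j ∈ L, ⟨i_L| A_a† A_b |j_L⟩ = μ_{a,b} δ_{i,j} with μ_{a,b} = Σ_r conj(λ_{r,a}) λ_{r,b} independent of i, j. -/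
open scoped Matrix

/-- The standard basis vector `|0…0i⟩` of `(ℂ^l)^{⊗(n'+1)}`: all first `n'`
tensor factors are `|0⟩` and the last one is `|i⟩`. -/
def zeroPad {l n' : ℕ} [NeZero l] (i : Fin l) : (Fin (n' + 1) → Fin l) → ℂ :=
  fun x => if x = Fin.snoc (fun _ => (0 : Fin l)) i then 1 else 0

lemma sum_mulVec' {m n κ : Type*} [Fintype n] [Fintype κ]
    (M : κ → Matrix m n ℂ) (y : n → ℂ) :
    (∑ r : κ, M r) *ᵥ y = ∑ r : κ, M r *ᵥ y := by
  funext x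
  simp only [Matrix.mulVec, dotProduct, Matrix.sum_apply, Finset.sum_apply, Finset.sum_mul]
  rw [Finset.sum_comm]

lemma dot_sum' {n κ : Type*} [Fintype n] [Fintype κ]
    (x : n → ℂ) (w : κ → n → ℂ) :
    x ⬝ᵥ (∑ r : κ, w r) = ∑ r : κ, x ⬝ᵥ w r := by
  simp only [dotProduct, Finset.sum_apply, Finset.mul_sum]
  rw [Finset.sum_comm]

lemma zeroPad_dot {l n' : ℕ} [NeZero l] (i j : Fin l) :
    star (zeroPad (n' := n') i) ⬝ᵥ zeroPad (n' := n') j = if i = j then 1 else 0 := by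
  classical
  simp only [dotProduct, zeroPad, Pi.star_apply, apply_ite (star : ℂ → ℂ),
    star_one, star_zero, ite_mul, one_mul, zero_mul]
  by_cases h : i = j
  · subst h; simp
  · rw [if_neg h]
    apply Finset.sum_eq_zero
    intro x _
    by_cases hx : x = Fin.snoc (fun _ => (0 : Fin l)) i
    · rw [if_pos hx, if_neg]
      intro hc
      apply h
      have := congrArg (fun f => f (Fin.last n')) (hx.symm.trans hc)
      simpa using this
    · rw [if_neg hx]

theorem stmt8 (l n n' : ℕ) [NeZero l]
    (ι κ : Type) [Fintype ι] [Fintype κ]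
    -- logical codewords, orthonormal
    (v : Fin l → (Fin n → Fin l) → ℂ)
    (hv : ∀ i j : Fin l, star (v i) ⬝ᵥ v j = if i = j then 1 else 0)
    -- Kraus operators (possibly non-square)
    (A : ι → Matrix (Fin (n' + 1) → Fin l) (Fin n → Fin l) ℂ)
    -- recovery superoperator
    (R : κ → Matrix (Fin (n' + 1) → Fin l) (Fin (n' + 1) → Fin l) ℂ)
    (lam : κ → ι → ℂ)
    (hR : ∀ (r : κ) (a : ι) (i : Fin l),
      (R r).mulVec ((A a).mulVec (v i)) = lam r a • zeroPad (n' := n') i)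
    (hcomplete : ∑ r : κ, (R r)ᴴ * R r = 1) :
    ∀ (a b : ι) (i j : Fin l),
      star ((A a).mulVec (v i)) ⬝ᵥ (A b).mulVec (v j)
        = (∑ r : κ, star (lam r a) * lam r b) * (if i = j then 1 else 0) := by
  intro a b i j
  set x := (A a).mulVec (v i) with hx
  set y := (A b).mulVec (v j) with hy
  have key : star x ⬝ᵥ y = ∑ r : κ, star ((R r).mulVec x) ⬝ᵥ ((R r).mulVec y) := by
    have : star x ⬝ᵥ y = star x ⬝ᵥ (∑ r : κ, (R r)ᴴ * R r).mulVec y := by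
      rw [hcomplete, Matrix.one_mulVec]
    rw [this]
    rw [sum_mulVec', dot_sum']
    refine Finset.sum_congr rfl fun r _ => ?_
    rw [← Matrix.mulVec_mulVec, Matrix.dotProduct_mulVec, ← Matrix.star_mulVec]
  rw [key]
  rw [Finset.sum_mul]
  refine Finset.sum_congr rfl fun r _ => ?_
  rw [hR r a i, hR r b j, dotProduct_smul, star_smul, smul_dotProduct,
    zeroPad_dot]
  simp [mul_assoc]
  ring
end
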